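/- Let G be a connected, locally compact, second countable, unimodular topological group with Haar measure λ, U : G → U(H) a strongly continuous square integrable projective unitary representation (∫_G |⟨ψ, U(g)φ⟩|² dλ(g) = d > 0 for all unit vectors ψ, φ), and E : ℬ(G) → L(H) a covariant observable, i.e., U(g)*E(B)U(g) = E(g⁻¹B) for all g ∈ G, B ∈ ℬ(G). Suppose f : G → ℂ is measurable and D(f,E) ⊆ D(f(g·),E) for all g ∈ G. Then U(g)D(f,E) = D(f,E) for all g ∈ G, D(f,E) is either {0} or dense in H, and moreover U(g)*L(f,E)U(g) ⊆ L(f(g·),E) for all g ∈ G (operator inclusion, i.e., extension of operators). -/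

import Mathlib

/-!
Covariance says that `ν (U g ψ) (U g φ)` is the image of `ν ψ φ` under `h ↦ g * h`. Hence
`U g φ ∈ D(f,E)` iff `φ ∈ D(f(g·),E)`, with equal integrals, which is the operator inclusion;
combined with `D(f,E) ⊆ D(f(g·),E)` it makes `D(f,E)` a `U`-invariant subspace, and the
invariance is an equality since `U g ∘ U g⁻¹` is a nonzero scalar. If `D(f,E)` contains some
`φ ≠ 0`, a vector `ψ` orthogonal to it satisfies `⟪ψ, U g φ⟫ = 0` for all `g`, which square
integrability with `d > 0` forbids unless `ψ = 0`; so `D(f,E)` is dense.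
-/

open MeasureTheory Filter Topology ComplexConjugate
open scoped ENNReal NNReal

noncomputable section

local notation "⟪" x ", " y "⟫" => @inner ℂ _ _ x y

/-- The total variation measure of a complex measure. -/
def MeasureTheory.ComplexMeasure.tv {Ω : Type*} [MeasurableSpace Ω]
    (ν : MeasureTheory.ComplexMeasure Ω) : MeasureTheory.Measure Ω :=
  (MeasureTheory.ComplexMeasure.re ν).totalVariation +
    (MeasureTheory.ComplexMeasure.im ν).totalVariation

/-- `f` is integrable with respect to the complex measure `ν`: it is integrable with respect
to the total variation measure of `ν`. -/
def MeasureTheory.ComplexMeasure.CIntegrable {Ω : Type*} [MeasurableSpace Ω]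
    (ν : MeasureTheory.ComplexMeasure Ω) (f : Ω → ℂ) : Prop :=
  MeasureTheory.Integrable f ν.tv

/-- The integral of a complex function against a signed measure. -/
def MeasureTheory.SignedMeasure.cintegral {Ω : Type*} [MeasurableSpace Ω]
    (σ : MeasureTheory.SignedMeasure Ω) (f : Ω → ℂ) : ℂ :=
  (∫ x, f x ∂σ.toJordanDecomposition.posPart) - ∫ x, f x ∂σ.toJordanDecomposition.negPart

/-- The integral of a complex function against a complex measure. -/
def MeasureTheory.ComplexMeasure.cintegral {Ω : Type*} [MeasurableSpace Ω]
    (ν : MeasureTheory.ComplexMeasure Ω) (f : Ω → ℂ) : ℂ :=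
  (MeasureTheory.ComplexMeasure.re ν).cintegral f +
    Complex.I * (MeasureTheory.ComplexMeasure.im ν).cintegral f

theorem Complex.enorm_le_enorm_re_add_enorm_im (z : ℂ) : ‖z‖ₑ ≤ ‖z.re‖ₑ + ‖z.im‖ₑ := by
  simp only [← ofReal_norm, ← ENNReal.ofReal_add (norm_nonneg _) (norm_nonneg _)]
  exact ENNReal.ofReal_le_ofReal (Complex.norm_le_abs_re_add_abs_im z)

namespace MeasureTheory

variable {α β : Type*} [MeasurableSpace α] [MeasurableSpace β]

def JordanDecomposition.map (e : α ≃ᵐ β) (j : JordanDecomposition α) :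
    JordanDecomposition β where
  posPart := j.posPart.map e
  negPart := j.negPart.map e
  mutuallySingular := e.measurableEmbedding.mutuallySingular_map j.mutuallySingular

namespace SignedMeasure

theorem toJordanDecomposition_map (e : α ≃ᵐ β) (s : SignedMeasure α) :
    toJordanDecomposition (s.map e) = s.toJordanDecomposition.map e := by
  refine toJordanDecomposition_eq (VectorMeasure.ext fun i hi => ?_)
  rw [VectorMeasure.map_apply _ e.measurable hi, s.apply_eq_posPart_real_sub_negPart_real
    (e.measurable hi), JordanDecomposition.toSignedMeasure, Measure.toSignedMeasure_sub_apply hi]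
  simp only [JordanDecomposition.map, Measure.real, Measure.map_apply e.measurable hi]

theorem cintegral_map (e : α ≃ᵐ β) (s : SignedMeasure α) (f : β → ℂ) :
    cintegral (s.map e) f = s.cintegral (f ∘ e) := by
  simp only [cintegral, toJordanDecomposition_map, JordanDecomposition.map,
    integral_map_equiv e f]
  rfl

end SignedMeasure

namespace ComplexMeasure

theorem re_map {φ : α → β} (hφ : Measurable φ) (ν : ComplexMeasure α) :
    re (ν.map φ) = (re ν).map φ := by
  ext i hi
  rw [VectorMeasure.map_apply _ hφ hi]
  exact congrArg Complex.re (VectorMeasure.map_apply ν hφ hi)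

theorem im_map {φ : α → β} (hφ : Measurable φ) (ν : ComplexMeasure α) :
    im (ν.map φ) = (im ν).map φ := by
  ext i hi
  rw [VectorMeasure.map_apply _ hφ hi]
  exact congrArg Complex.im (VectorMeasure.map_apply ν hφ hi)

theorem cintegral_map (e : α ≃ᵐ β) (ν : ComplexMeasure α) (f : β → ℂ) :
    cintegral (ν.map e) f = ν.cintegral (f ∘ e) := by
  simp only [cintegral, re_map e.measurable, im_map e.measurable, SignedMeasure.cintegral_map]

theorem variation_le_tv (ν : ComplexMeasure α) : ν.variation ≤ ν.tv :=
  VectorMeasure.variation_le_of_forall_enorm_le fun B _ =>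
    (ν B).enorm_le_enorm_re_add_enorm_im.trans
      (add_le_add ((re ν).enorm_le_totalVariation B) ((im ν).enorm_le_totalVariation B))

theorem tv_le_variation_add_variation (ν : ComplexMeasure α) :
    ν.tv ≤ ν.variation + ν.variation := by
  rw [tv, SignedMeasure.totalVariation_eq_variation, SignedMeasure.totalVariation_eq_variation]
  refine add_le_add (VectorMeasure.variation_le_of_forall_enorm_le fun B _ => ?_)
    (VectorMeasure.variation_le_of_forall_enorm_le fun B _ => ?_)
  · exact (enorm_le_iff_norm_le.2 (Complex.abs_re_le_norm _)).trans
      (ν.enorm_measure_le_variation B)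
  · exact (enorm_le_iff_norm_le.2 (Complex.abs_im_le_norm _)).trans
      (ν.enorm_measure_le_variation B)

theorem cintegrable_iff_integrable_variation {ν : ComplexMeasure α} {f : α → ℂ} :
    ν.CIntegrable f ↔ Integrable f ν.variation :=
  ⟨fun h => h.mono_measure ν.variation_le_tv,
    fun h => (h.add_measure h).mono_measure ν.tv_le_variation_add_variation⟩

theorem CIntegrable.add {ν₁ ν₂ : ComplexMeasure α} {f : α → ℂ} (h₁ : ν₁.CIntegrable f)
    (h₂ : ν₂.CIntegrable f) : CIntegrable (ν₁ + ν₂) f := by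
  rw [cintegrable_iff_integrable_variation] at *
  exact (h₁.add_measure h₂).mono_measure VectorMeasure.variation_add_le

theorem CIntegrable.smul {ν : ComplexMeasure α} {f : α → ℂ} (c : ℂ) (h : ν.CIntegrable f) :
    CIntegrable (c • ν) f := by
  rw [cintegrable_iff_integrable_variation, VectorMeasure.variation_smul] at *
  exact h.smul_measure ENNReal.coe_ne_top

theorem cintegrable_zero (f : α → ℂ) : CIntegrable 0 f := by
  simp [cintegrable_iff_integrable_variation]

theorem cintegrable_map_iff (e : α ≃ᵐ β) (ν : ComplexMeasure α) (f : β → ℂ) :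
    CIntegrable (ν.map e) f ↔ ν.CIntegrable (f ∘ e) := by
  rw [cintegrable_iff_integrable_variation, cintegrable_iff_integrable_variation,
    e.measurableEmbedding.variation_map, integrable_map_equiv]

end ComplexMeasure

end MeasureTheory

section CovariantObservable

open ContinuousLinearMap

variable {α H : Type*} [MeasurableSpace α] [NormedAddCommGroup H] [InnerProductSpace ℂ H]
  {E : Set α → H →L[ℂ] H} {ν : H → H → ComplexMeasure α}

theorem add_right_of_eq_inner
    (hν : ∀ ψ φ B, MeasurableSet B → ν ψ φ B = ⟪ψ, E B φ⟫) (ψ φ₁ φ₂ : H) :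
    ν ψ (φ₁ + φ₂) = ν ψ φ₁ + ν ψ φ₂ :=
  VectorMeasure.ext fun B hB => by
    rw [add_apply, hν _ _ B hB, hν _ _ B hB, hν _ _ B hB, map_add, inner_add_right]

theorem smul_right_of_eq_inner
    (hν : ∀ ψ φ B, MeasurableSet B → ν ψ φ B = ⟪ψ, E B φ⟫) (a : ℂ) (ψ φ : H) :
    ν ψ (a • φ) = a • ν ψ φ :=
  VectorMeasure.ext fun B hB => by
    rw [smul_apply, hν _ _ B hB, hν _ _ B hB, map_smul, inner_smul_right, smul_eq_mul]

def cintegrableDomain (hν : ∀ ψ φ B, MeasurableSet B → ν ψ φ B = ⟪ψ, E B φ⟫)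
    (f : α → ℂ) : Submodule ℂ H where
  carrier := {φ | ∀ ψ, (ν ψ φ).CIntegrable f}
  add_mem' {φ₁ φ₂} h₁ h₂ ψ := by
    rw [add_right_of_eq_inner hν]
    exact (h₁ ψ).add (h₂ ψ)
  zero_mem' ψ := by
    have h₀ : ν ψ 0 = 0 := by
      rw [← zero_smul ℂ (0 : H), smul_right_of_eq_inner hν]
      exact zero_smul ℂ (ν ψ 0)
    rw [h₀]
    exact ComplexMeasure.cintegrable_zero f
  smul_mem' a φ h ψ := by
    rw [smul_right_of_eq_inner hν]
    exact (h ψ).smul a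

variable {V : H →L[ℂ] H} {e : α ≃ᵐ α}

theorem map_eq_of_adjoint_comp_comp [CompleteSpace H]
    (hν : ∀ ψ φ B, MeasurableSet B → ν ψ φ B = ⟪ψ, E B φ⟫)
    (hV : ∀ B, MeasurableSet B → adjoint V ∘L E B ∘L V = E (e ⁻¹' B))
    (ψ φ : H) : ν (V ψ) (V φ) = (ν ψ φ).map e :=
  VectorMeasure.ext fun B hB => by
    rw [VectorMeasure.map_apply _ e.measurable hB, hν _ _ B hB, hν _ _ _ (e.measurable hB),
      ← adjoint_inner_right, ← hV B hB, comp_apply, comp_apply]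

theorem forall_cintegrable_apply_iff [CompleteSpace H]
    (hν : ∀ ψ φ B, MeasurableSet B → ν ψ φ B = ⟪ψ, E B φ⟫)
    (hV : ∀ B, MeasurableSet B → adjoint V ∘L E B ∘L V = E (e ⁻¹' B))
    (hV_surj : Function.Surjective V) (f : α → ℂ) (φ : H) :
    (∀ ψ, (ν ψ (V φ)).CIntegrable f) ↔ ∀ ψ, (ν ψ φ).CIntegrable (f ∘ e) :=
  hV_surj.forall.trans <| forall_congr' fun ψ => by
    rw [map_eq_of_adjoint_comp_comp hν hV, ComplexMeasure.cintegrable_map_iff]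

theorem adjoint_apply_eq_of_cintegral [CompleteSpace H]
    (hν : ∀ ψ φ B, MeasurableSet B → ν ψ φ B = ⟪ψ, E B φ⟫)
    (hV : ∀ B, MeasurableSet B → adjoint V ∘L E B ∘L V = E (e ⁻¹' B))
    {f : α → ℂ} {L L' : H → H} {φ : H}
    (hL : ∀ ψ, ⟪ψ, L (V φ)⟫ = (ν ψ (V φ)).cintegral f)
    (hL' : ∀ ψ, ⟪ψ, L' φ⟫ = (ν ψ φ).cintegral (f ∘ e)) :
    adjoint V (L (V φ)) = L' φ :=
  ext_inner_left ℂ fun ψ => by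
    rw [adjoint_inner_right, hL, hL', map_eq_of_adjoint_comp_comp hν hV,
      ComplexMeasure.cintegral_map]

end CovariantObservable

section ProjectiveRepresentation

variable {G H : Type*} [Group G] [NormedAddCommGroup H] [InnerProductSpace ℂ H]
  {U : G → H →L[ℂ] H} {c : G → G → ℂ}

theorem apply_apply_inv_eq_smul (hproj : ∀ g h, (U g).comp (U h) = c g h • U (g * h))
    (hU₁ : Function.Surjective (U 1)) (g : G) (φ : H) :
    U g (U g⁻¹ φ) = (c g g⁻¹ * c 1 1) • φ := by
  have hU₁_apply : ∀ x, U 1 x = c 1 1 • x := hU₁.forall.2 fun y => by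
    simpa using congrArg (· y) (hproj 1 1)
  have h := congrArg (· φ) (hproj g g⁻¹)
  simp only [ContinuousLinearMap.comp_apply, smul_apply, mul_inv_cancel] at h
  rw [h, hU₁_apply, smul_smul]

theorem image_eq_of_forall_apply_mem (hproj : ∀ g h, (U g).comp (U h) = c g h • U (g * h))
    (hU₁ : Function.Surjective (U 1)) (hc : ∀ g h, c g h ≠ 0) {K : Submodule ℂ H}
    (hK : ∀ g, ∀ φ ∈ K, U g φ ∈ K) (g : G) : U g '' K = K := by
  refine (Set.image_subset_iff.2 fun φ => hK g φ).antisymm fun φ hφ => ?_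
  have hc' : c g g⁻¹ * c 1 1 ≠ 0 := mul_ne_zero (hc _ _) (hc _ _)
  refine ⟨(c g g⁻¹ * c 1 1)⁻¹ • U g⁻¹ φ, K.smul_mem _ (hK _ φ hφ), ?_⟩
  rw [map_smul, apply_apply_inv_eq_smul hproj hU₁, smul_smul, inv_mul_cancel₀ hc', one_smul]

end ProjectiveRepresentation

section SquareIntegrable

variable {G H : Type*} [MeasurableSpace G] [NormedAddCommGroup H] [InnerProductSpace ℂ H]
  [CompleteSpace H] {μ : Measure G} {U : G → H →L[ℂ] H} {d : ℝ}

theorem dense_span_orbit (hd : d ≠ 0)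
    (hsq : ∀ ψ φ : H, ‖ψ‖ = 1 → ‖φ‖ = 1 → ∫ g, ‖⟪ψ, U g φ⟫‖ ^ 2 ∂μ = d)
    {φ : H} (hφ : φ ≠ 0) : Dense (Submodule.span ℂ (Set.range fun g => U g φ) : Set H) := by
  rw [Submodule.dense_iff_topologicalClosure_eq_top, Submodule.topologicalClosure_eq_top_iff,
    Submodule.eq_bot_iff]
  intro ψ hψ
  by_contra hψ₀
  have horth : ∀ g, ⟪ψ, U g φ⟫ = 0 := fun g => inner_eq_zero_symm.1 <|
    (Submodule.mem_orthogonal _ ψ).1 hψ _ (Submodule.subset_span ⟨g, rfl⟩)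
  apply hd
  rw [← hsq _ _ (norm_smul_inv_norm (𝕜 := ℂ) hψ₀) (norm_smul_inv_norm (𝕜 := ℂ) hφ)]
  simp [horth]

theorem eq_bot_or_dense_of_forall_apply_mem (hd : d ≠ 0)
    (hsq : ∀ ψ φ : H, ‖ψ‖ = 1 → ‖φ‖ = 1 → ∫ g, ‖⟪ψ, U g φ⟫‖ ^ 2 ∂μ = d)
    {K : Submodule ℂ H} (hK : ∀ g, ∀ φ ∈ K, U g φ ∈ K) : K = ⊥ ∨ Dense (K : Set H) := by
  refine or_iff_not_imp_left.2 fun hK₀ => ?_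
  obtain ⟨φ, hφK, hφ⟩ := K.ne_bot_iff.1 hK₀
  exact (dense_span_orbit hd hsq hφ).mono
    (Submodule.span_le.2 (Set.range_subset_iff.2 fun g => hK g φ hφK))

end SquareIntegrable

theorem stmt11_general {G : Type*} [Group G] [TopologicalSpace G] [IsTopologicalGroup G]
    [MeasurableSpace G] [BorelSpace G]
    (lam : Measure G)
    {H : Type*} [NormedAddCommGroup H] [InnerProductSpace ℂ H] [CompleteSpace H]
    (U : G → H →L[ℂ] H)
    (hUsurj : ∀ g : G, Function.Surjective (U g))
    (c : G → G → ℂ) (hc : ∀ g h : G, ‖c g h‖ = 1)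
    (hproj : ∀ g h : G, (U g).comp (U h) = c g h • U (g * h))
    (d : ℝ) (hd : 0 < d)
    (hsq : ∀ ψ φ : H, ‖ψ‖ = 1 → ‖φ‖ = 1 → ∫ g, ‖⟪ψ, U g φ⟫‖ ^ 2 ∂lam = d)
    (E : Set G → H →L[ℂ] H)
    (ν : H → H → MeasureTheory.ComplexMeasure G)
    (hν : ∀ (ψ φ : H) (B : Set G), MeasurableSet B → ν ψ φ B = ⟪ψ, E B φ⟫)
    (hcov : ∀ (g : G) (B : Set G), MeasurableSet B →
      ((ContinuousLinearMap.adjoint (U g)).comp ((E B).comp (U g))) =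
        E ((fun h => g * h) ⁻¹' B))
    (f : G → ℂ)
    (hdom : ∀ g : G,
      {φ : H | ∀ ψ : H, (ν ψ φ).CIntegrable f} ⊆
      {φ : H | ∀ ψ : H, (ν ψ φ).CIntegrable fun h => f (g * h)})
    -- `Lf` is the operator integral `L(f,E)` on `D(f,E)`
    (Lf : H → H)
    (hLf : ∀ φ ∈ {φ : H | ∀ ψ : H, (ν ψ φ).CIntegrable f},
      ∀ ψ : H, ⟪ψ, Lf φ⟫ = (ν ψ φ).cintegral f)
    -- `Lg g` is the operator integral `L(f(g·),E)` on `D(f(g·),E)`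
    (Lg : G → H → H)
    (hLg : ∀ (g : G), ∀ φ ∈ {φ : H | ∀ ψ : H, (ν ψ φ).CIntegrable fun h => f (g * h)},
      ∀ ψ : H, ⟪ψ, Lg g φ⟫ = (ν ψ φ).cintegral fun h => f (g * h)) :
    (∀ g : G, (U g) '' {φ : H | ∀ ψ : H, (ν ψ φ).CIntegrable f} =
        {φ : H | ∀ ψ : H, (ν ψ φ).CIntegrable f}) ∧
    ({φ : H | ∀ ψ : H, (ν ψ φ).CIntegrable f} = {0} ∨
      Dense {φ : H | ∀ ψ : H, (ν ψ φ).CIntegrable f}) ∧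
    -- the operator inclusion U(g)* L(f,E) U(g) ⊆ L(f(g·),E)
    (∀ (g : G) (φ : H), (∀ ψ : H, (ν ψ (U g φ)).CIntegrable f) →
      (∀ ψ : H, (ν ψ φ).CIntegrable fun h => f (g * h)) ∧
      (ContinuousLinearMap.adjoint (U g)) (Lf (U g φ)) = Lg g φ) := by
  have hcov' (g : G) (B : Set G) (hB : MeasurableSet B) :
      (U g).adjoint ∘L E B ∘L U g = E (MeasurableEquiv.mulLeft g ⁻¹' B) :=
    hcov g B hB
  have hD : ∀ g, ∀ φ ∈ cintegrableDomain hν f, U g φ ∈ cintegrableDomain hν f :=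
    fun g φ hφ => (forall_cintegrable_apply_iff hν (hcov' g) (hUsurj g) f φ).2 (hdom g hφ)
  have hc₀ : ∀ g h, c g h ≠ 0 := fun g h => norm_ne_zero_iff.1 (by rw [hc]; exact one_ne_zero)
  refine ⟨image_eq_of_forall_apply_mem hproj (hUsurj 1) hc₀ hD, ?_, fun g φ hφ => ?_⟩
  · have h := eq_bot_or_dense_of_forall_apply_mem hd.ne' hsq hD
    rwa [← SetLike.coe_set_eq, Submodule.bot_coe] at h
  · have hφg := (forall_cintegrable_apply_iff hν (hcov' g) (hUsurj g) f φ).1 hφ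
    exact ⟨hφg, adjoint_apply_eq_of_cintegral hν (hcov' g) (hLf _ hφ) (hLg g φ hφg)⟩

/-- Let `G` be a connected, locally compact, second countable, unimodular
group with Haar measure `λ`, `U` a strongly continuous square integrable projective unitary
representation, and `E` a `U`-covariant observable. If `f : G → ℂ` is measurable and
`D(f,E) ⊆ D(f(g·),E)` for all `g`, then `U(g)D(f,E) = D(f,E)` for all `g`, `D(f,E)` is
either `{0}` or dense, and `U(g)*L(f,E)U(g) ⊆ L(f(g·),E)` for all `g`. -/
theorem stmt11 {G : Type*} [Group G] [TopologicalSpace G] [IsTopologicalGroup G]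
    [LocallyCompactSpace G] [SecondCountableTopology G] [ConnectedSpace G]
    [MeasurableSpace G] [BorelSpace G]
    (lam : Measure G) [lam.IsHaarMeasure] [lam.IsMulRightInvariant]
    {H : Type*} [NormedAddCommGroup H] [InnerProductSpace ℂ H] [CompleteSpace H]
    (U : G → H →L[ℂ] H)
    (hUiso : ∀ (g : G) (φ : H), ‖U g φ‖ = ‖φ‖)
    (hUsurj : ∀ g : G, Function.Surjective (U g))
    (c : G → G → ℂ) (hc : ∀ g h : G, ‖c g h‖ = 1)
    (hproj : ∀ g h : G, (U g).comp (U h) = c g h • U (g * h))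
    (hUcont : ∀ φ : H, Continuous fun g => U g φ)
    (d : ℝ) (hd : 0 < d)
    (hsq : ∀ ψ φ : H, ‖ψ‖ = 1 → ‖φ‖ = 1 → ∫ g, ‖⟪ψ, U g φ⟫‖ ^ 2 ∂lam = d)
    (E : Set G → H →L[ℂ] H)
    (hEpos : ∀ B : Set G, MeasurableSet B → (E B).IsPositive)
    (hEone : E Set.univ = 1)
    (ν : H → H → MeasureTheory.ComplexMeasure G)
    (hν : ∀ (ψ φ : H) (B : Set G), MeasurableSet B → ν ψ φ B = ⟪ψ, E B φ⟫)
    (hcov : ∀ (g : G) (B : Set G), MeasurableSet B →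
      ((ContinuousLinearMap.adjoint (U g)).comp ((E B).comp (U g))) =
        E ((fun h => g * h) ⁻¹' B))
    (f : G → ℂ) (hf : Measurable f)
    (hdom : ∀ g : G,
      {φ : H | ∀ ψ : H, (ν ψ φ).CIntegrable f} ⊆
      {φ : H | ∀ ψ : H, (ν ψ φ).CIntegrable fun h => f (g * h)})
    -- `Lf` is the operator integral `L(f,E)` on `D(f,E)`
    (Lf : H → H)
    (hLf : ∀ φ ∈ {φ : H | ∀ ψ : H, (ν ψ φ).CIntegrable f},
      ∀ ψ : H, ⟪ψ, Lf φ⟫ = (ν ψ φ).cintegral f)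
    -- `Lg g` is the operator integral `L(f(g·),E)` on `D(f(g·),E)`
    (Lg : G → H → H)
    (hLg : ∀ (g : G), ∀ φ ∈ {φ : H | ∀ ψ : H, (ν ψ φ).CIntegrable fun h => f (g * h)},
      ∀ ψ : H, ⟪ψ, Lg g φ⟫ = (ν ψ φ).cintegral fun h => f (g * h)) :
    (∀ g : G, (U g) '' {φ : H | ∀ ψ : H, (ν ψ φ).CIntegrable f} =
        {φ : H | ∀ ψ : H, (ν ψ φ).CIntegrable f}) ∧
    ({φ : H | ∀ ψ : H, (ν ψ φ).CIntegrable f} = {0} ∨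
      Dense {φ : H | ∀ ψ : H, (ν ψ φ).CIntegrable f}) ∧
    -- the operator inclusion U(g)* L(f,E) U(g) ⊆ L(f(g·),E)
    (∀ (g : G) (φ : H), (∀ ψ : H, (ν ψ (U g φ)).CIntegrable f) →
      (∀ ψ : H, (ν ψ φ).CIntegrable fun h => f (g * h)) ∧
      (ContinuousLinearMap.adjoint (U g)) (Lf (U g φ)) = Lg g φ) :=
  stmt11_general lam U hUsurj c hc hproj d hd hsq E ν hν hcov f hdom Lf hLf Lg hLg
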